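/- arXiv:1702.00852 — 2 statements merged into one kernel-verified Lean document; each statement's English description precedes it below -/
import Mathlib

section
/- Let f ∈ H, let f̂ be a sample consistent reconstruction of f, let t̂ = P_T f̂, and for 0 ≤ α ≤ 1 set f̂_α = α f̂ + (1 − α) t̂. Then the reconstruction error satisfies ‖f̂_α − f‖² = ‖f̂ − f‖² + (1 − α)² ‖P_{S∩T⊥} f‖². -/
/-!
Write `d = f̂ − P_T f̂`. The second consistency condition says `d ∈ S`, and `d ∈ T⊥` always holds;
the first says `f̂ − f ∈ S⊥`. Then `f − d = (f − f̂) + P_T f̂` is orthogonal to `S ∩ T⊥`, so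
`d = P_{S∩T⊥} f`. Since `f̂_α − f = (f̂ − f) − (1 − α) d` with `f̂ − f ⊥ d`, Pythagoras gives the identity.
-/

open scoped InnerProductSpace

namespace Submodule

variable {𝕜 E : Type*} [RCLike 𝕜] [NormedAddCommGroup E] [InnerProductSpace 𝕜 E]

theorem sub_mem_orthogonal_of_orthogonalProjectionOnto_eq {K : Submodule 𝕜 E}
    [K.HasOrthogonalProjection] {x y : E}
    (h : K.orthogonalProjectionOnto x = K.orthogonalProjectionOnto y) : x - y ∈ Kᗮ := by
  rw [← orthogonalProjectionOnto_eq_zero_iff, map_sub, h, sub_self]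

theorem mem_of_orthogonalProjectionOnto_orthogonal_eq_zero {K : Submodule 𝕜 E}
    [K.HasOrthogonalProjection] {x : E} (h : Kᗮ.orthogonalProjectionOnto x = 0) : x ∈ K := by
  simpa only [orthogonal_orthogonal] using orthogonalProjectionOnto_eq_zero_iff.mp h

theorem starProjection_inf_orthogonal_eq_sub_starProjection {S T : Submodule 𝕜 E}
    [T.HasOrthogonalProjection] [(S ⊓ Tᗮ).HasOrthogonalProjection] {f g : E}
    (hfg : g - f ∈ Sᗮ) (hgS : g - T.starProjection g ∈ S) :
    (S ⊓ Tᗮ).starProjection f = g - T.starProjection g := by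
  refine eq_starProjection_of_mem_of_inner_eq_zero
    (mem_inf.mpr ⟨hgS, sub_starProjection_mem_orthogonal g⟩) fun w hw ↦ ?_
  have hfg_w : ⟪f - g, w⟫_𝕜 = 0 := by
    rw [← neg_sub, inner_neg_left, inner_left_of_mem_orthogonal (mem_inf.mp hw).1 hfg, neg_zero]
  have hTg_w : ⟪T.starProjection g, w⟫_𝕜 = 0 :=
    inner_right_of_mem_orthogonal (starProjection_apply_mem T g) (mem_inf.mp hw).2
  rw [sub_sub_eq_add_sub, add_sub_right_comm, inner_add_left, hfg_w, hTg_w, add_zero]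

end Submodule

theorem norm_sub_ofReal_smul_sq_of_inner_eq_zero {𝕜 E : Type*} [RCLike 𝕜] [NormedAddCommGroup E]
    [InnerProductSpace 𝕜 E] {u v : E} (h : ⟪u, v⟫_𝕜 = 0) (c : ℝ) :
    ‖u - (c : 𝕜) • v‖ ^ 2 = ‖u‖ ^ 2 + c ^ 2 * ‖v‖ ^ 2 := by
  rw [@norm_sub_sq 𝕜, inner_smul_right, h, mul_zero, map_zero, mul_zero, sub_zero, norm_smul,
    RCLike.norm_ofReal, mul_pow, sq_abs]

open Submodule in
theorem stmt_3_general {𝕜 H : Type*} [RCLike 𝕜] [NormedAddCommGroup H] [InnerProductSpace 𝕜 H]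
    (S T : Submodule 𝕜 H)
    [Submodule.HasOrthogonalProjection S] [Submodule.HasOrthogonalProjection T]
    [Submodule.HasOrthogonalProjection (S ⊓ Tᗮ)]
    (f fhat : H)
    (hconsist : (Submodule.orthogonalProjectionOnto S fhat : H) = (Submodule.orthogonalProjectionOnto S f : H))
    (hmin : (Submodule.orthogonalProjectionOnto Sᗮ (fhat - (Submodule.orthogonalProjectionOnto T fhat : H)) : H) = 0)
    (α : ℝ) :
    ‖((α : 𝕜) • fhat + ((1 - α : ℝ) : 𝕜) • (Submodule.orthogonalProjectionOnto T fhat : H)) - f‖ ^ 2 =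
      ‖fhat - f‖ ^ 2 + (1 - α) ^ 2 * ‖(Submodule.orthogonalProjectionOnto (S ⊓ Tᗮ) f : H)‖ ^ 2 := by
  have hres : fhat - f ∈ Sᗮ := sub_mem_orthogonal_of_orthogonalProjectionOnto_eq (Subtype.ext hconsist)
  have hd : fhat - T.starProjection fhat ∈ S :=
    mem_of_orthogonalProjectionOnto_orthogonal_eq_zero (coe_eq_zero.mp hmin)
  simp only [coe_orthogonalProjectionOnto_apply]
  rw [starProjection_inf_orthogonal_eq_sub_starProjection hres hd,
    ← norm_sub_ofReal_smul_sq_of_inner_eq_zero (inner_left_of_mem_orthogonal hd hres)]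
  congr 2
  push_cast
  module

/-- Let `fhat` be a sample consistent reconstruction of `f`, `that = P_T fhat`, and
for `0 ≤ α ≤ 1` set `fα = α • fhat + (1 − α) • that`. Then
`‖fα − f‖² = ‖fhat − f‖² + (1 − α)² ‖P_{S∩T⊥} f‖²`. -/
theorem stmt_3 {𝕜 H : Type*} [RCLike 𝕜] [NormedAddCommGroup H] [InnerProductSpace 𝕜 H]
    [CompleteSpace H] (S T : Submodule 𝕜 H)
    [Submodule.HasOrthogonalProjection S] [Submodule.HasOrthogonalProjection T]
    [Submodule.HasOrthogonalProjection (S ⊓ Tᗮ)]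
    (f fhat : H)
    (hconsist : (Submodule.orthogonalProjectionOnto S fhat : H) = (Submodule.orthogonalProjectionOnto S f : H))
    (hmin : (Submodule.orthogonalProjectionOnto Sᗮ (fhat - (Submodule.orthogonalProjectionOnto T fhat : H)) : H) = 0)
    (α : ℝ) (hα0 : 0 ≤ α) (hα1 : α ≤ 1) :
    ‖((α : 𝕜) • fhat + ((1 - α : ℝ) : 𝕜) • (Submodule.orthogonalProjectionOnto T fhat : H)) - f‖ ^ 2 =
      ‖fhat - f‖ ^ 2 + (1 - α) ^ 2 * ‖(Submodule.orthogonalProjectionOnto (S ⊓ Tᗮ) f : H)‖ ^ 2 :=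
  stmt_3_general S T f fhat hconsist hmin α
end

section
/- Let ν := inf{‖P_{T⊥} x‖ / ‖x‖ : x ∈ P_{S⊥}(T⊥), x ≠ 0}, suppose ν > 0, let f ∈ H, and let x̂_n be the minimal-norm element of {x ∈ S⊥ : P_{S⊥} P_{T⊥}(x + P_S f) = 0}. Define the projection-onto-convex-sets (Richardson) iteration by x₀ = 0 and x_m = x_{m−1} − P_{S⊥} P_{T⊥} x_{m−1} − P_{S⊥} P_{T⊥} P_S f for m ≥ 1. Then for all m ≥ 0 the iterates satisfy ‖x_m − x̂_n‖ ≤ (1 − ν²)^m ‖x̂_n‖. -/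
/-! The errors `e_m = x_m - x̂` satisfy `e_{m+1} = P_{S⊥} P_T e_m` and stay in the closure `M`
of `P_{S⊥}(T⊥)`: `e_0 = -x̂` lies in `M` because minimality makes `x̂` orthogonal to `T ∩ S⊥`,
while `Mᗮ ∩ S⊥ ⊆ T`. The bound `ν ‖u‖ ≤ ‖P_{T⊥} u‖` extends from `P_{S⊥}(T⊥)` to `M` by
continuity, so `‖P_T u‖² ≤ (1 - ν²) ‖u‖²` on `M`, and `P_{S⊥} P_T` is a contraction of `M` with
factor `1 - ν²`. -/

open Submodule RCLike

theorem mul_norm_le_norm_of_mem_closure {X Y : Type*} [SeminormedAddCommGroup X]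
    [SeminormedAddCommGroup Y] {s : Set X} {A : X → Y} (hA : Continuous A) {ν : ℝ}
    (h : ∀ u ∈ s, ν * ‖u‖ ≤ ‖A u‖) {u : X} (hu : u ∈ closure s) : ν * ‖u‖ ≤ ‖A u‖ :=
  closure_minimal h (isClosed_le (continuous_const.mul continuous_norm) hA.norm) hu

namespace Submodule

variable {𝕜 E : Type*} [RCLike 𝕜] [NormedAddCommGroup E] [InnerProductSpace 𝕜 E]

theorem mem_orthogonal_of_forall_norm_le_norm_sub {K : Submodule 𝕜 E} {u : E}
    (h : ∀ p ∈ K, ‖u‖ ≤ ‖u - p‖) : u ∈ Kᗮ := by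
  have hbdd : BddBelow (Set.range fun p : K ↦ ‖u - p‖) := ⟨0, by rintro _ ⟨p, rfl⟩; positivity⟩
  have hmin : ‖u - 0‖ = ⨅ p : K, ‖u - p‖ :=
    le_antisymm (le_ciInf fun p ↦ by simpa using h p p.2) (by simpa using ciInf_le hbdd 0)
  simpa [mem_orthogonal'] using (norm_eq_iInf_iff_inner_eq_zero K K.zero_mem).1 hmin

theorem norm_sq_starProjection_le_of_mul_norm_le (K : Submodule 𝕜 E) [K.HasOrthogonalProjection]
    {ν : ℝ} (hν : 0 ≤ ν) {u : E} (h : ν * ‖u‖ ≤ ‖Kᗮ.starProjection u‖) :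
    ‖K.starProjection u‖ ^ 2 ≤ (1 - ν ^ 2) * ‖u‖ ^ 2 := by
  have hsq : (ν * ‖u‖) ^ 2 ≤ ‖Kᗮ.starProjection u‖ ^ 2 := pow_le_pow_left₀ (by positivity) h 2
  nlinarith [K.norm_sq_eq_add_norm_sq_starProjection u]

theorem sub_starProjection_starProjection_orthogonal_of_mem {K L : Submodule 𝕜 E}
    [K.HasOrthogonalProjection] [L.HasOrthogonalProjection] {u : E} (hu : u ∈ K) :
    u - K.starProjection (Lᗮ.starProjection u) = K.starProjection (L.starProjection u) := by
  rw [starProjection_orthogonal_val, map_sub, starProjection_eq_self_iff.2 hu, sub_sub_cancel]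

theorem norm_sq_starProjection_starProjection_le (K L : Submodule 𝕜 E) [K.HasOrthogonalProjection]
    [L.HasOrthogonalProjection] (u : E) :
    ‖K.starProjection (L.starProjection u)‖ ^ 2 ≤
      ‖L.starProjection u‖ * ‖L.starProjection (K.starProjection (L.starProjection u))‖ := by
  set v := K.starProjection (L.starProjection u)
  have hv : inner 𝕜 v v = inner 𝕜 (L.starProjection u) (L.starProjection v) := by
    calc inner 𝕜 v v = inner 𝕜 (L.starProjection u) (K.starProjection v) :=
          K.inner_starProjection_left_eq_right _ _
      _ = inner 𝕜 (L.starProjection (L.starProjection u)) v := by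
          rw [starProjection_eq_self_iff.2 (K.starProjection_apply_mem _),
            starProjection_eq_self_iff.2 (L.starProjection_apply_mem _)]
      _ = inner 𝕜 (L.starProjection u) (L.starProjection v) :=
          L.inner_starProjection_left_eq_right _ _
  calc ‖v‖ ^ 2 = re (inner 𝕜 v v) := (inner_self_eq_norm_sq v).symm
    _ ≤ ‖inner 𝕜 v v‖ := re_le_norm _
    _ ≤ _ := hv ▸ norm_inner_le_norm _ _

/- The factor is `c` rather than the obvious `√c` because, for `v = P_K P_L u`,
`‖v‖² ≤ ‖P_L u‖ ‖P_L v‖` and both factors are controlled by `√c`. -/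
theorem norm_starProjection_starProjection_le {K L : Submodule 𝕜 E} [K.HasOrthogonalProjection]
    [L.HasOrthogonalProjection] {W : Set E} {c : ℝ} (hc : 0 ≤ c)
    (hW : ∀ w ∈ W, ‖L.starProjection w‖ ^ 2 ≤ c * ‖w‖ ^ 2) {u : E} (hu : u ∈ W)
    (hv : K.starProjection (L.starProjection u) ∈ W) :
    ‖K.starProjection (L.starProjection u)‖ ≤ c * ‖u‖ := by
  set v := K.starProjection (L.starProjection u)
  have hprod : (‖L.starProjection u‖ * ‖L.starProjection v‖) ^ 2 ≤ (c * ‖u‖ * ‖v‖) ^ 2 :=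
    calc _ = ‖L.starProjection u‖ ^ 2 * ‖L.starProjection v‖ ^ 2 := by ring
      _ ≤ (c * ‖u‖ ^ 2) * (c * ‖v‖ ^ 2) :=
          mul_le_mul (hW u hu) (hW v hv) (by positivity) (by positivity)
      _ = _ := by ring
  have hsq : ‖v‖ * ‖v‖ ≤ c * ‖u‖ * ‖v‖ := by
    rw [← sq]
    exact (norm_sq_starProjection_starProjection_le K L u).trans
      ((pow_le_pow_iff_left₀ (by positivity) (by positivity) two_ne_zero).1 hprod)
  rcases (norm_nonneg v).eq_or_lt with h0 | hpos
  · rw [← h0]; positivity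
  · exact le_of_mul_le_mul_right hsq hpos

section

variable (S T : Submodule 𝕜 E) [S.HasOrthogonalProjection]

noncomputable def closureImageOrthogonal : Submodule 𝕜 E :=
  (Tᗮ.map (Sᗮ.starProjection : E →ₗ[𝕜] E)).topologicalClosure

theorem closureImageOrthogonal_le : closureImageOrthogonal S T ≤ Sᗮ :=
  topologicalClosure_minimal _ (by rintro _ ⟨y, -, rfl⟩; exact Sᗮ.starProjection_apply_mem y)
    S.isClosed_orthogonal

variable [T.HasOrthogonalProjection]

theorem starProjection_orthogonal_mem_closureImageOrthogonal (u : E) :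
    Sᗮ.starProjection (Tᗮ.starProjection u) ∈ closureImageOrthogonal S T :=
  le_topologicalClosure _ ⟨_, Tᗮ.starProjection_apply_mem u, rfl⟩

variable {S T} in
theorem starProjection_mem_closureImageOrthogonal {u : E} (hu : u ∈ closureImageOrthogonal S T) :
    Sᗮ.starProjection (T.starProjection u) ∈ closureImageOrthogonal S T := by
  rw [← sub_starProjection_starProjection_orthogonal_of_mem (closureImageOrthogonal_le S T hu)]
  exact sub_mem hu (starProjection_orthogonal_mem_closureImageOrthogonal S T u)

theorem mem_closureImageOrthogonal [CompleteSpace E] {x : E} (hxS : x ∈ Sᗮ)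
    (hxT : x ∈ (T ⊓ Sᗮ)ᗮ) : x ∈ closureImageOrthogonal S T := by
  rw [closureImageOrthogonal, ← orthogonal_orthogonal_eq_closure, mem_orthogonal]
  intro z hz
  have hzT : Sᗮ.starProjection z ∈ T := by
    rw [← T.orthogonal_orthogonal]
    intro y hy
    rw [← inner_starProjection_left_eq_right]
    exact hz _ ⟨y, hy, rfl⟩
  calc inner 𝕜 z x = inner 𝕜 (Sᗮ.starProjection z) x := by
        rw [inner_starProjection_left_eq_right, starProjection_eq_self_iff.2 hxS]
    _ = 0 := hxT _ ⟨hzT, Sᗮ.starProjection_apply_mem z⟩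

def normRatios : Set ℝ :=
  {r | ∃ y ∈ Tᗮ, Sᗮ.starProjection y ≠ 0 ∧
    r = ‖Tᗮ.starProjection (Sᗮ.starProjection y)‖ / ‖Sᗮ.starProjection y‖}

theorem normRatios_bddBelow : BddBelow (normRatios S T) :=
  ⟨0, by rintro _ ⟨y, -, -, rfl⟩; positivity⟩

theorem sInf_normRatios_le_one : sInf (normRatios S T) ≤ 1 := by
  rcases (normRatios S T).eq_empty_or_nonempty with h | ⟨r, hr⟩
  · simp [h]
  refine csInf_le_of_le (normRatios_bddBelow S T) hr ?_
  obtain ⟨y, -, hy, rfl⟩ := hr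
  exact div_le_one_of_le₀ (norm_starProjection_apply_le _ _) (norm_nonneg _)

theorem sInf_normRatios_mul_norm_le {u : E} (hu : u ∈ closureImageOrthogonal S T) :
    sInf (normRatios S T) * ‖u‖ ≤ ‖Tᗮ.starProjection u‖ := by
  rw [← SetLike.mem_coe, closureImageOrthogonal, topologicalClosure_coe] at hu
  refine mul_norm_le_norm_of_mem_closure (Tᗮ.starProjection).continuous ?_ hu
  rintro _ ⟨y, hy, rfl⟩
  by_cases h0 : Sᗮ.starProjection y = 0
  · simp [h0]
  have hpos : 0 < ‖Sᗮ.starProjection y‖ := norm_pos_iff.2 h0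
  calc sInf (normRatios S T) * ‖Sᗮ.starProjection y‖
      ≤ ‖Tᗮ.starProjection (Sᗮ.starProjection y)‖ / ‖Sᗮ.starProjection y‖ *
          ‖Sᗮ.starProjection y‖ :=
        mul_le_mul_of_nonneg_right (csInf_le (normRatios_bddBelow S T) ⟨y, hy, h0, rfl⟩) hpos.le
    _ = _ := div_mul_cancel₀ _ hpos.ne'

variable {S T} in
theorem norm_le_pow_mul_norm_of_eq_sub_starProjection {c : ℝ} (hc : 0 ≤ c)
    (hT : ∀ u ∈ closureImageOrthogonal S T, ‖T.starProjection u‖ ^ 2 ≤ c * ‖u‖ ^ 2) {e : ℕ → E}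
    (he0 : e 0 ∈ closureImageOrthogonal S T)
    (he : ∀ m, e (m + 1) = e m - Sᗮ.starProjection (Tᗮ.starProjection (e m))) (m : ℕ) :
    ‖e m‖ ≤ c ^ m * ‖e 0‖ := by
  suffices e m ∈ closureImageOrthogonal S T ∧ ‖e m‖ ≤ c ^ m * ‖e 0‖ from this.2
  induction m with
  | zero => simpa using he0
  | succ m ih =>
    rw [he, sub_starProjection_starProjection_orthogonal_of_mem
      (closureImageOrthogonal_le S T ih.1)]
    have hnext := starProjection_mem_closureImageOrthogonal ih.1
    refine ⟨hnext, ?_⟩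
    calc _ ≤ c * ‖e m‖ := norm_starProjection_starProjection_le hc hT ih.1 hnext
      _ ≤ c * (c ^ m * ‖e 0‖) := mul_le_mul_of_nonneg_left ih.2 hc
      _ = _ := by ring

end

end Submodule

/-- with `ν := inf {‖P_{T⊥} x‖/‖x‖ : x ∈ P_{S⊥}(T⊥), x ≠ 0} > 0` and `xn` the
minimal-norm element of `{x ∈ S⊥ : P_{S⊥} P_{T⊥}(x + P_S f) = 0}`, the POCS (Richardson)
iteration `x₀ = 0`, `x_m = x_{m−1} − P_{S⊥} P_{T⊥} x_{m−1} − P_{S⊥} P_{T⊥} P_S f` satisfies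
`‖x_m − xn‖ ≤ (1 − ν²)^m ‖xn‖` for all `m ≥ 0`. -/
theorem stmt_19 {𝕜 H : Type*} [RCLike 𝕜] [NormedAddCommGroup H] [InnerProductSpace 𝕜 H]
    [CompleteSpace H] (S T : Submodule 𝕜 H)
    [Submodule.HasOrthogonalProjection S] [Submodule.HasOrthogonalProjection T]
    (ν : ℝ)
    (hν : ν = sInf {r : ℝ | ∃ y ∈ Tᗮ, (Submodule.orthogonalProjectionOnto Sᗮ y : H) ≠ 0 ∧
      r = ‖(Submodule.orthogonalProjectionOnto Tᗮ ((Submodule.orthogonalProjectionOnto Sᗮ y : H)) : H)‖ /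
        ‖(Submodule.orthogonalProjectionOnto Sᗮ y : H)‖})
    (hνpos : 0 < ν) (f : H) (xn : H)
    (hxn : xn ∈ Sᗮ ∧
      (Submodule.orthogonalProjectionOnto Sᗮ ((xn + (Submodule.orthogonalProjectionOnto S f : H)) -
        (Submodule.orthogonalProjectionOnto T (xn + (Submodule.orthogonalProjectionOnto S f : H)) : H)) : H) = 0 ∧
      ∀ x : H, x ∈ Sᗮ →
        (Submodule.orthogonalProjectionOnto Sᗮ ((x + (Submodule.orthogonalProjectionOnto S f : H)) -
          (Submodule.orthogonalProjectionOnto T (x + (Submodule.orthogonalProjectionOnto S f : H)) : H)) : H) = 0 →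
        ‖xn‖ ≤ ‖x‖)
    (x : ℕ → H) (hx0 : x 0 = 0)
    (hxiter : ∀ m : ℕ, x (m + 1) =
      x m - (Submodule.orthogonalProjectionOnto Sᗮ ((Submodule.orthogonalProjectionOnto Tᗮ (x m) : H)) : H) -
        (Submodule.orthogonalProjectionOnto Sᗮ
          ((Submodule.orthogonalProjectionOnto Tᗮ ((Submodule.orthogonalProjectionOnto S f : H)) : H)) : H)) :
    ∀ m : ℕ, ‖x m - xn‖ ≤ (1 - ν ^ 2) ^ m * ‖xn‖ := by
  simp only [coe_orthogonalProjectionOnto_apply, ← starProjection_orthogonal_val] at hν hxn hxiter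
  obtain ⟨hxnS, hxnsol, hxnmin⟩ := hxn
  have hνratio : ν = sInf (normRatios S T) := hν
  set M := closureImageOrthogonal S T
  have hc : 0 ≤ 1 - ν ^ 2 := by nlinarith [hνratio ▸ sInf_normRatios_le_one S T]
  have hPT : ∀ u ∈ M, ‖T.starProjection u‖ ^ 2 ≤ (1 - ν ^ 2) * ‖u‖ ^ 2 := fun u hu ↦
    norm_sq_starProjection_le_of_mul_norm_le T hνpos.le
      (hνratio ▸ sInf_normRatios_mul_norm_le S T hu)
  have hxnM : xn ∈ M := by
    refine mem_closureImageOrthogonal S T hxnS (mem_orthogonal_of_forall_norm_le_norm_sub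
      fun p hp ↦ hxnmin _ (sub_mem hxnS hp.2) ?_)
    rwa [sub_add_eq_add_sub, map_sub (Tᗮ.starProjection),
      (starProjection_apply_eq_zero_iff _).2 (T.le_orthogonal_orthogonal hp.1), sub_zero]
  have herr : ∀ m, x (m + 1) - xn =
      (x m - xn) - Sᗮ.starProjection (Tᗮ.starProjection (x m - xn)) := by
    intro m
    rw [map_add, map_add] at hxnsol
    rw [hxiter m, eq_neg_of_add_eq_zero_right hxnsol, map_sub, map_sub]
    abel
  intro m
  simpa [hx0] using norm_le_pow_mul_norm_of_eq_sub_starProjection hc hPT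
    (e := fun m ↦ x m - xn) (by simpa [hx0] using M.neg_mem hxnM) herr m
end
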